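/- The Choi–Lam form S(x,y,z) = x⁴y² + y⁴z² + z⁴x² − 3x²y²z² is positive semidefinite but is not a sum of squares of polynomials. -/

import Mathlib

section Aux
open Polynomial

lemma sum_sq_zero {k : ℕ} {c : Fin k → ℝ} (h : ∑ i, c i ^ 2 = 0) (i : Fin k) : c i = 0 := by
  have := (Finset.sum_eq_zero_iff_of_nonneg (fun j _ => sq_nonneg (c j))).mp h i (Finset.mem_univ i)
  exact (pow_eq_zero_iff two_ne_zero).mp this

lemma coeff_sum_sq {k : ℕ} {Q : Fin k → Polynomial ℝ} {R : Polynomial ℝ}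
    (h : ∑ i, Q i ^ 2 = R) (j : ℕ)
    (H : ∀ (i : Fin k) (a b : ℕ), a + b = 2*j → a < b → (Q i).coeff a * (Q i).coeff b = 0) :
    R.coeff (2*j) = ∑ i, ((Q i).coeff j) ^ 2 := by
  subst h
  rw [finset_sum_coeff]
  refine Finset.sum_congr rfl (fun i _ => ?_)
  rw [sq, Polynomial.coeff_mul]
  rw [Finset.sum_eq_single_of_mem (j, j) (by simp [Finset.mem_antidiagonal]; omega)]
  · exact (sq _).symm
  · rintro ⟨a, b⟩ hab hne
    rw [Finset.HasAntidiagonal.mem_antidiagonal] at hab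
    rcases lt_trichotomy a b with hlt | heq | hgt
    · exact H i a b (by omega) hlt
    · exact absurd (by simp_all; omega) hne
    · rw [mul_comm]; exact H i b a (by omega) hgt

lemma sos_coeff_high {k : ℕ} {Q : Fin k → Polynomial ℝ} {R : Polynomial ℝ}
    (h : ∑ i, Q i ^ 2 = R) :
    ∀ j, R.natDegree < 2 * j → ∀ i, (Q i).coeff j = 0 := by
  set D := Finset.univ.sup (fun i => (Q i).natDegree) with hD
  suffices H : ∀ m j, D < j + m → R.natDegree < 2*j → ∀ i, (Q i).coeff j = 0 by
    intro j hj i; exact H (D+1) j (by omega) hj i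
  intro m
  induction m with
  | zero =>
    intro j hj _ i
    have h1 : (Q i).natDegree ≤ D := Finset.le_sup (f := fun i => (Q i).natDegree) (Finset.mem_univ i)
    exact Polynomial.coeff_eq_zero_of_natDegree_lt (by omega)
  | succ m ih =>
    intro j hj hR i
    have hcc : R.coeff (2*j) = ∑ i, ((Q i).coeff j) ^ 2 := by
      refine coeff_sum_sq h j (fun i a b hab hlt => ?_)
      have hb : (Q i).coeff b = 0 := ih b (by omega) (by omega) i
      rw [hb, mul_zero]
    have h0 : R.coeff (2*j) = 0 := Polynomial.coeff_eq_zero_of_natDegree_lt hR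
    exact sum_sq_zero (by rw [← hcc, h0]) i

lemma sos_coeff_low {k : ℕ} {Q : Fin k → Polynomial ℝ} {R : Polynomial ℝ}
    (h : ∑ i, Q i ^ 2 = R) :
    ∀ j, (∀ l, l ≤ 2*j → R.coeff l = 0) → ∀ i, (Q i).coeff j = 0 := by
  intro j
  induction j using Nat.strong_induction_on with
  | _ j ih =>
    intro hR i
    have hcc : R.coeff (2*j) = ∑ i, ((Q i).coeff j) ^ 2 := by
      refine coeff_sum_sq h j (fun i a b hab hlt => ?_)
      have ha : (Q i).coeff a = 0 := ih a (by omega) (fun l hl => hR l (by omega)) i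
      rw [ha, zero_mul]
    exact sum_sq_zero (by rw [← hcc, hR (2*j) le_rfl]) i

lemma eval_deg2 {P : Polynomial ℝ} (h : ∀ j, 3 ≤ j → P.coeff j = 0) (t : ℝ) :
    P.eval t = P.coeff 0 + P.coeff 1 * t + P.coeff 2 * t^2 := by
  have hd : P.natDegree ≤ 2 := natDegree_le_iff_coeff_eq_zero.mpr (fun n hn => h n hn)
  rw [Polynomial.eval_eq_sum_range' (n := 3) (by omega)]
  simp [Finset.sum_range_succ]


section
open MvPolynomial in
lemma exists_line_poly (p : MvPolynomial (Fin 3) ℝ) (u w : Fin 3 → ℝ) :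
    ∃ P : Polynomial ℝ, ∀ t, P.eval t = MvPolynomial.eval (fun j => u j + w j * t) p := by
  refine ⟨MvPolynomial.aeval (fun j => Polynomial.C (u j) + Polynomial.C (w j) * Polynomial.X) p,
    fun t => ?_⟩
  induction p using MvPolynomial.induction_on with
  | C a => simp [algebraMap_eq]
  | add p q hp hq => simp [hp, hq]
  | mul_X p j hp => simp [hp]

-- packaged: functions realizable on a line, with sum of squares identity, yields polynomial sum
lemma sos_line {k : ℕ} (q : Fin k → ℝ → ℝ) (R : Polynomial ℝ)
    (hq : ∀ i, ∃ P : Polynomial ℝ, ∀ t, P.eval t = q i t)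
    (hsum : ∀ t, ∑ i, (q i t) ^ 2 = R.eval t) :
    ∃ Q : Fin k → Polynomial ℝ, (∀ i t, (Q i).eval t = q i t) ∧ ∑ i, Q i ^ 2 = R := by
  choose Q hQ using hq
  refine ⟨Q, hQ, Polynomial.funext fun t => ?_⟩
  rw [Polynomial.eval_finset_sum]
  simp only [Polynomial.eval_pow, hQ]
  exact hsum t
end


lemma amgm_key (p q r : ℝ) (hp : 0 ≤ p) (hq : 0 ≤ q) (hr : 0 ≤ r) :
    3*(p*q*r) ≤ p^2*q + q^2*r + r^2*p := by
  rcases le_total p q with h1 | h1 <;> rcases le_total q r with h2 | h2 <;> rcases le_total p r with h3 | h3 <;>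
  nlinarith [mul_nonneg hq (sq_nonneg (p-r)), mul_nonneg hr (sq_nonneg (q-p)), mul_nonneg hp (sq_nonneg (r-q)),
    mul_nonneg hr (mul_nonneg (sub_nonneg.2 h1) (sub_nonneg.2 h2)), mul_nonneg (mul_nonneg hp hq) hr]

lemma cor_lin {k : ℕ} (q : Fin k → ℝ → ℝ) (s : ℝ)
    (hq : ∀ i, ∃ P : Polynomial ℝ, ∀ t, P.eval t = q i t)
    (hsum : ∀ t, ∑ i, (q i t) ^ 2 = s * t ^ 2) :
    ∀ i t, q i t = q i 1 * t := by
  obtain ⟨Q, hQ, hS⟩ := sos_line q (C s * X ^ 2) hq (by intro t; rw [hsum t]; simp)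
  have hdeg : (C s * X ^ 2 : Polynomial ℝ).natDegree ≤ 2 :=
    le_trans (natDegree_C_mul_le s _) (by simp [natDegree_X_pow])
  have hhi : ∀ i j, 2 ≤ j → (Q i).coeff j = 0 := fun i j hj =>
    sos_coeff_high hS j (by omega) i
  have hlo : ∀ i, (Q i).coeff 0 = 0 := fun i =>
    sos_coeff_low hS 0 (by intro l hl; interval_cases l; simp) i
  intro i t
  have he : ∀ t, (Q i).eval t = (Q i).coeff 1 * t := by
    intro t
    rw [eval_deg2 (fun j hj => hhi i j (by omega)) t, hlo i, hhi i 2 le_rfl]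
    ring
  rw [← hQ i t, ← hQ i 1, he, he, mul_one]

lemma cor_quad {k : ℕ} (q : Fin k → ℝ → ℝ) (s : ℝ)
    (hq : ∀ i, ∃ P : Polynomial ℝ, ∀ t, P.eval t = q i t)
    (hsum : ∀ t, ∑ i, (q i t) ^ 2 = s * t ^ 4) :
    ∀ i t, q i t = q i 1 * t ^ 2 := by
  obtain ⟨Q, hQ, hS⟩ := sos_line q (C s * X ^ 4) hq (by intro t; rw [hsum t]; simp)
  have hdeg : (C s * X ^ 4 : Polynomial ℝ).natDegree ≤ 4 :=
    le_trans (natDegree_C_mul_le s _) (by simp [natDegree_X_pow])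
  have hhi : ∀ i j, 3 ≤ j → (Q i).coeff j = 0 := fun i j hj =>
    sos_coeff_high hS j (by omega) i
  have hlo : ∀ i j, j ≤ 1 → (Q i).coeff j = 0 := by
    intro i j hj
    refine sos_coeff_low hS j (fun l hl => ?_) i
    rw [coeff_C_mul, coeff_X_pow]
    have h4 : ¬ (l = 4) := by omega
    simp [h4]
  intro i t
  have he : ∀ t, (Q i).eval t = (Q i).coeff 2 * t ^ 2 := by
    intro t
    rw [eval_deg2 (fun j hj => hhi i j hj) t, hlo i 0 (by omega), hlo i 1 (by omega)]
    ring
  rw [← hQ i t, ← hQ i 1, he, he, one_pow, mul_one]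

lemma cor_interp {k : ℕ} (q : Fin k → ℝ → ℝ) (A B Cc : ℝ)
    (hq : ∀ i, ∃ P : Polynomial ℝ, ∀ t, P.eval t = q i t)
    (hsum : ∀ t, ∑ i, (q i t) ^ 2 = A * t ^ 4 + B * t ^ 2 + Cc) :
    ∀ i t, q i t = q i 0 * (1 - t^2) + q i 1 * ((t^2 + t)/2) + q i (-1) * ((t^2 - t)/2) := by
  obtain ⟨Q, hQ, hS⟩ := sos_line q (C A * X ^ 4 + C B * X ^ 2 + C Cc) hq
    (by intro t; rw [hsum t]; simp)
  have hdeg : (C A * X ^ 4 + C B * X ^ 2 + C Cc : Polynomial ℝ).natDegree ≤ 4 := by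
    compute_degree
  have hhi : ∀ i j, 3 ≤ j → (Q i).coeff j = 0 := fun i j hj =>
    sos_coeff_high hS j (by omega) i
  intro i t
  have he : ∀ t, (Q i).eval t = (Q i).coeff 0 + (Q i).coeff 1 * t + (Q i).coeff 2 * t^2 :=
    fun t => eval_deg2 (fun j hj => hhi i j hj) t
  rw [← hQ i t, ← hQ i 1, ← hQ i 0, ← hQ i (-1), he, he, he, he]
  ring

lemma not_sos_aux {k : ℕ} (f : Fin k → ℝ → ℝ → ℝ → ℝ)
    (hpoly : ∀ (i : Fin k) (x₁ y₁ x₂ y₂ x₃ y₃ : ℝ),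
      ∃ P : Polynomial ℝ, ∀ t, P.eval t = f i (x₁+y₁*t) (x₂+y₂*t) (x₃+y₃*t))
    (hS : ∀ x y z, ∑ i, f i x y z ^ 2
      = x^4*y^2 + y^4*z^2 + z^4*x^2 - 3*(x^2*y^2*z^2)) : False := by
  have hz : ∀ x y z : ℝ, x^4*y^2 + y^4*z^2 + z^4*x^2 - 3*(x^2*y^2*z^2) = 0 →
      ∀ i, f i x y z = 0 := by
    intro x y z h0 i
    exact sum_sq_zero (by rw [hS x y z, h0]) i
  -- six axis-parallel line families on coordinate planes
  have F1 : ∀ (y : ℝ) (i : Fin k) (t : ℝ), f i t y 0 = f i 1 y 0 * t ^ 2 := by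
    intro y
    refine cor_quad (fun i t => f i t y 0) (y^2) (fun i => ?_) (fun t => by rw [hS]; ring)
    obtain ⟨P, hP⟩ := hpoly i 0 1 y 0 0 0
    exact ⟨P, fun t => by simpa using hP t⟩
  have F2 : ∀ (x : ℝ) (i : Fin k) (t : ℝ), f i x t 0 = f i x 1 0 * t := by
    intro x
    refine cor_lin (fun i t => f i x t 0) (x^4) (fun i => ?_) (fun t => by rw [hS]; ring)
    obtain ⟨P, hP⟩ := hpoly i x 0 0 1 0 0
    exact ⟨P, fun t => by simpa using hP t⟩
  have F3 : ∀ (z : ℝ) (i : Fin k) (t : ℝ), f i 0 t z = f i 0 1 z * t ^ 2 := by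
    intro z
    refine cor_quad (fun i t => f i 0 t z) (z^2) (fun i => ?_) (fun t => by rw [hS]; ring)
    obtain ⟨P, hP⟩ := hpoly i 0 0 0 1 z 0
    exact ⟨P, fun t => by simpa using hP t⟩
  have F4 : ∀ (y : ℝ) (i : Fin k) (t : ℝ), f i 0 y t = f i 0 y 1 * t := by
    intro y
    refine cor_lin (fun i t => f i 0 y t) (y^4) (fun i => ?_) (fun t => by rw [hS]; ring)
    obtain ⟨P, hP⟩ := hpoly i 0 0 y 0 0 1
    exact ⟨P, fun t => by simpa using hP t⟩
  have F5 : ∀ (z : ℝ) (i : Fin k) (t : ℝ), f i t 0 z = f i 1 0 z * t := by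
    intro z
    refine cor_lin (fun i t => f i t 0 z) (z^4) (fun i => ?_) (fun t => by rw [hS]; ring)
    obtain ⟨P, hP⟩ := hpoly i 0 1 0 0 z 0
    exact ⟨P, fun t => by simpa using hP t⟩
  have F6 : ∀ (x : ℝ) (i : Fin k) (t : ℝ), f i x 0 t = f i x 0 1 * t ^ 2 := by
    intro x
    refine cor_quad (fun i t => f i x 0 t) (x^2) (fun i => ?_) (fun t => by rw [hS]; ring)
    obtain ⟨P, hP⟩ := hpoly i x 0 0 0 0 1
    exact ⟨P, fun t => by simpa using hP t⟩
  -- generic interpolation families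
  have F7 : ∀ (x y : ℝ) (i : Fin k) (t : ℝ), f i x y t = f i x y 0 * (1 - t^2)
      + f i x y 1 * ((t^2 + t)/2) + f i x y (-1) * ((t^2 - t)/2) := by
    intro x y
    refine cor_interp (fun i t => f i x y t) (x^2) (y^4 - 3*x^2*y^2) (x^4*y^2)
      (fun i => ?_) (fun t => by rw [hS]; ring)
    obtain ⟨P, hP⟩ := hpoly i x 0 y 0 0 1
    exact ⟨P, fun t => by simpa using hP t⟩
  have F8 : ∀ (x z : ℝ) (i : Fin k) (t : ℝ), f i x t z = f i x 0 z * (1 - t^2)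
      + f i x 1 z * ((t^2 + t)/2) + f i x (-1) z * ((t^2 - t)/2) := by
    intro x z
    refine cor_interp (fun i t => f i x t z) (z^2) (x^4 - 3*x^2*z^2) (z^4*x^2)
      (fun i => ?_) (fun t => by rw [hS]; ring)
    obtain ⟨P, hP⟩ := hpoly i x 0 0 1 z 0
    exact ⟨P, fun t => by simpa using hP t⟩
  have F9 : ∀ (y z : ℝ) (i : Fin k) (t : ℝ), f i t y z = f i 0 y z * (1 - t^2)
      + f i 1 y z * ((t^2 + t)/2) + f i (-1) y z * ((t^2 - t)/2) := by
    intro y z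
    refine cor_interp (fun i t => f i t y z) (y^2) (z^4 - 3*y^2*z^2) (y^4*z^2)
      (fun i => ?_) (fun t => by rw [hS]; ring)
    obtain ⟨P, hP⟩ := hpoly i 0 1 y 0 z 0
    exact ⟨P, fun t => by simpa using hP t⟩
  -- plane formulas
  have hP1 : ∀ (i : Fin k) (x y : ℝ), f i x y 0 = f i 1 1 0 * (x^2*y) := by
    intro i x y
    rw [F2 x i y, F1 1 i x]; ring
  have hP2 : ∀ (i : Fin k) (y z : ℝ), f i 0 y z = f i 0 1 1 * (y^2*z) := by
    intro i y z
    rw [F4 y i z, F3 1 i y]; ring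
  have hP3 : ∀ (i : Fin k) (x z : ℝ), f i x 0 z = f i 1 0 1 * (x*z^2) := by
    intro i x z
    rw [F6 x i z, F5 1 i x]; ring
  -- sign-point zeros
  have z111 : ∀ i, f i 1 1 1 = 0 := hz 1 1 1 (by norm_num)
  have z11m : ∀ i, f i 1 1 (-1) = 0 := hz 1 1 (-1) (by norm_num)
  have z1m1 : ∀ i, f i 1 (-1) 1 = 0 := hz 1 (-1) 1 (by norm_num)
  have zm11 : ∀ i, f i (-1) 1 1 = 0 := hz (-1) 1 1 (by norm_num)
  have z1mm : ∀ i, f i 1 (-1) (-1) = 0 := hz 1 (-1) (-1) (by norm_num)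
  have zm1m : ∀ i, f i (-1) 1 (-1) = 0 := hz (-1) 1 (-1) (by norm_num)
  have zmm1 : ∀ i, f i (-1) (-1) 1 = 0 := hz (-1) (-1) 1 (by norm_num)
  have zmmm : ∀ i, f i (-1) (-1) (-1) = 0 := hz (-1) (-1) (-1) (by norm_num)
  -- f on lines y,z = ±1
  have hx11 : ∀ (i : Fin k) (x : ℝ), f i x 1 1 = f i 0 1 1 * (1 - x^2) := by
    intro i x; rw [F9 1 1 i x, z111 i, zm11 i]; ring
  have hxm1 : ∀ (i : Fin k) (x : ℝ), f i x (-1) 1 = f i 0 1 1 * (1 - x^2) := by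
    intro i x
    rw [F9 (-1) 1 i x, z1m1 i, zmm1 i, hP2 i (-1) 1]; ring
  have hx1m : ∀ (i : Fin k) (x : ℝ), f i x 1 (-1) = - (f i 0 1 1 * (1 - x^2)) := by
    intro i x
    rw [F9 1 (-1) i x, z11m i, zm1m i, hP2 i 1 (-1)]; ring
  have hxmm : ∀ (i : Fin k) (x : ℝ), f i x (-1) (-1) = - (f i 0 1 1 * (1 - x^2)) := by
    intro i x
    rw [F9 (-1) (-1) i x, z1mm i, zmmm i, hP2 i (-1) (-1)]; ring
  -- f on plane z = 1 and z = -1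
  have hxy1 : ∀ (i : Fin k) (x y : ℝ),
      f i x y 1 = f i 1 0 1 * x * (1 - y^2) + f i 0 1 1 * (1 - x^2) * y^2 := by
    intro i x y
    rw [F8 x 1 i y, hP3 i x 1, hx11 i x, hxm1 i x]; ring
  have hxym : ∀ (i : Fin k) (x y : ℝ),
      f i x y (-1) = f i 1 0 1 * x * (1 - y^2) - f i 0 1 1 * (1 - x^2) * y^2 := by
    intro i x y
    rw [F8 x (-1) i y, hP3 i x (-1), hx1m i x, hxmm i x]; ring
  -- the full formula
  have hfull : ∀ (i : Fin k) (x y z : ℝ),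
      f i x y z = f i 1 1 0 * (x^2*y) * (1 - z^2)
        + f i 1 0 1 * x * (1 - y^2) * z^2
        + f i 0 1 1 * (1 - x^2) * y^2 * z := by
    intro i x y z
    rw [F7 x y i z, hP1 i x y, hxy1 i x y, hxym i x y]; ring
  -- zeros at (±2, ±2, ±2) kill the parameters
  have habc : ∀ i : Fin k, f i 1 1 0 = 0 := by
    intro i
    have e1 := hz 2 2 2 (by norm_num) i
    have e2 := hz 2 2 (-2) (by norm_num) i
    have e3 := hz 2 (-2) 2 (by norm_num) i
    have e4 := hz (-2) 2 2 (by norm_num) i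
    rw [hfull i 2 2 2] at e1
    rw [hfull i 2 2 (-2)] at e2
    rw [hfull i 2 (-2) 2] at e3
    rw [hfull i (-2) 2 2] at e4
    norm_num at e1 e2 e3 e4
    linarith
  -- contradiction with S(1,1,0) = 1
  have h1 : (∑ i, f i 1 1 0 ^ 2) = 1 := by rw [hS]; norm_num
  rw [Finset.sum_eq_zero (fun i _ => by rw [habc i]; ring)] at h1
  exact zero_ne_one h1


end Aux


open MvPolynomial

/-- A real polynomial is a sum of squares (sos) if it equals a finite sum of squares
of real polynomials. -/
def IsSos {n : ℕ} (p : MvPolynomial (Fin n) ℝ) : Prop :=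
  ∃ (k : ℕ) (g : Fin k → MvPolynomial (Fin n) ℝ), p = ∑ i, g i ^ 2

/-- A real polynomial is positive semidefinite (psd) if it takes nonnegative values
at every real point. -/
def Psd {n : ℕ} (p : MvPolynomial (Fin n) ℝ) : Prop :=
  ∀ x : Fin n → ℝ, 0 ≤ eval x p

/-- The Choi–Lam form S(x,y,z) = x⁴y² + y⁴z² + z⁴x² − 3x²y²z². -/
noncomputable def ChoiLam : MvPolynomial (Fin 3) ℝ :=
  X 0 ^ 4 * X 1 ^ 2 + X 1 ^ 4 * X 2 ^ 2 + X 2 ^ 4 * X 0 ^ 2 - 3 * (X 0 ^ 2 * X 1 ^ 2 * X 2 ^ 2)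

/-- The Choi–Lam form is psd but not sos. -/
theorem choiLam_psd_not_sos : Psd ChoiLam ∧ ¬ IsSos ChoiLam := by
  constructor
  · intro v
    have hk := amgm_key (v 0 ^ 2) (v 1 ^ 2) (v 2 ^ 2) (sq_nonneg _) (sq_nonneg _) (sq_nonneg _)
    simp only [ChoiLam, map_sub, map_add, map_mul, map_pow, map_ofNat, MvPolynomial.eval_X]
    nlinarith [hk]
  · rintro ⟨k, g, hg⟩
    refine not_sos_aux (fun i x y z => eval ![x, y, z] (g i)) ?_ ?_
    · intro i x₁ y₁ x₂ y₂ x₃ y₃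
      obtain ⟨P, hP⟩ := exists_line_poly (g i) ![x₁, x₂, x₃] ![y₁, y₂, y₃]
      refine ⟨P, fun t => ?_⟩
      have hv : (fun j => ![x₁, x₂, x₃] j + ![y₁, y₂, y₃] j * t)
          = ![x₁ + y₁ * t, x₂ + y₂ * t, x₃ + y₃ * t] := by
        funext j; fin_cases j <;> simp
      rw [hP t, hv]
    · intro x y z
      have h := congrArg (MvPolynomial.eval ![x, y, z]) hg
      simp only [ChoiLam, map_sub, map_add, map_mul, map_pow, map_ofNat, MvPolynomial.eval_X, map_sum,
        Matrix.cons_val_zero, Matrix.cons_val_one, Matrix.head_cons,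
        Matrix.cons_val_two, Matrix.tail_cons] at h
      rw [← h]
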